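/- Fix d ≥ 1 and, for each coordinate j ∈ {1,…,d}, a nonempty finite set of grid thresholds T_j ⊂ ℝ. Let F = ⋃_{i=1}^N ∏_{j=1}^d [a_{ij}, b_{ij}] be a finite union of nonempty closed axis-aligned boxes all of whose endpoints lie on the grid, i.e. a_{ij} ∈ T_j, b_{ij} ∈ T_j, and a_{ij} ≤ b_{ij} for all i, j. Suppose B = ∏_{j=1}^d [u_j, v_j] (with u_j ≤ v_j for all j) is a nonempty closed axis-aligned box with B ⊆ F that is maximal with respect to inclusion among closed axis-aligned boxes contained in F (i.e. any closed axis-aligned box B′ with B ⊆ B′ ⊆ F satisfies B′ = B). Then every endpoint of B lies on the grid: u_j ∈ T_j and v_j ∈ T_j for all j ∈ {1,…,d}. -/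

import Mathlib

/-!
If an endpoint `u j` of the maximal box were not a left endpoint `a i j` of any of the given
boxes, the box could be pushed down in coordinate `j` to the largest `a i j` below `u j`: every
point of the enlarged box, moved up to the level `u j` in coordinate `j`, lies in the original box,
hence in some `Icc (a i) (b i)`, and with no left endpoint in between that box already contains the
original point. Upper endpoints follow by negation, which reflects boxes.
-/

open Set Function Pointwise

section LinearOrder

variable {ι κ α : Type*} [LinearOrder α]

def IsMaximalIccIn (S : Set (ι → α)) (u v : ι → α) : Prop :=
  Icc u v ⊆ S ∧ ∀ u' v', Icc u v ⊆ Icc u' v' → Icc u' v' ⊆ S → Icc u' v' = Icc u v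

variable {a b : κ → ι → α} {u v : ι → α}

theorem Icc_update_subset_iUnion_Icc [DecidableEq ι] {j : ι} {w : α} (huv : u j ≤ v j)
    (hgap : ∀ i, a i j ≤ u j → a i j ≤ w) (hB : Icc u v ⊆ ⋃ i, Icc (a i) (b i)) :
    Icc (update u j w) v ⊆ ⋃ i, Icc (a i) (b i) := by
  rintro y ⟨hwy, hyv⟩
  rw [update_le_iff] at hwy
  have hy' : update y j (max (y j) (u j)) ∈ Icc u v :=
    ⟨le_update_iff.2 ⟨le_max_right _ _, hwy.2⟩,
      update_le_iff.2 ⟨max_le (hyv j) huv, fun k _ => hyv k⟩⟩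
  obtain ⟨i, hai, hbi⟩ := mem_iUnion.1 (hB hy')
  rw [le_update_iff] at hai
  rw [update_le_iff] at hbi
  refine mem_iUnion.2 ⟨i, fun k => ?_, fun k => ?_⟩
  · rcases eq_or_ne k j with rfl | hk
    · rcases le_total (u k) (y k) with h | h
      · simpa [max_eq_left h] using hai.1
      · exact (hgap i (by simpa [max_eq_right h] using hai.1)).trans hwy.1
    · exact hai.2 k hk
  · rcases eq_or_ne k j with rfl | hk
    · exact (le_max_left _ _).trans hbi.1
    · exact hbi.2 k hk

theorem IsMaximalIccIn.exists_lower_eq [Finite κ] (huv : u ≤ v)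
    (hmax : IsMaximalIccIn (⋃ i, Icc (a i) (b i)) u v) (j : ι) : ∃ i, a i j = u j := by
  classical
  by_contra! hne
  obtain ⟨i₀, hi₀, -⟩ := mem_iUnion.1 (hmax.1 (left_mem_Icc.2 huv))
  obtain ⟨i₁, hi₁, hgreatest⟩ := exists_max_image {i | a i j < u j} (a · j) (toFinite _)
    ⟨i₀, (hi₀ j).lt_of_ne (hne i₀)⟩
  have hgap : ∀ i, a i j ≤ u j → a i j ≤ a i₁ j :=
    fun i hi => hgreatest i (hi.lt_of_ne (hne i))
  have hle : update u j (a i₁ j) ≤ u := update_le_self_iff.2 hi₁.le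
  have heq := hmax.2 _ v (Icc_subset_Icc_left hle)
    (Icc_update_subset_iUnion_Icc (huv j) hgap hmax.1)
  have hmem : update u j (a i₁ j) ∈ Icc u v := heq ▸ left_mem_Icc.2 (hle.trans huv)
  simpa using hi₁.trans_le (hmem.1 j)

end LinearOrder

section OrderedAddCommGroup

variable {ι κ α : Type*} [AddCommGroup α] [LinearOrder α] [IsOrderedAddMonoid α]

theorem IsMaximalIccIn.neg {S : Set (ι → α)} {u v : ι → α} (h : IsMaximalIccIn S u v) :
    IsMaximalIccIn (-S) (-v) (-u) := by
  refine ⟨by rw [← neg_Icc]; exact neg_subset_neg.2 h.1, fun u' v' h₁ h₂ => ?_⟩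
  rw [← neg_subset_neg, neg_neg, neg_Icc] at h₂
  rw [← neg_subset_neg, ← neg_Icc, neg_neg, neg_Icc] at h₁
  rw [← neg_Icc, ← neg_inj, neg_neg, neg_Icc]
  exact h.2 _ _ h₁ h₂

theorem IsMaximalIccIn.exists_upper_eq [Finite κ] {a b : κ → ι → α} {u v : ι → α}
    (huv : u ≤ v) (hmax : IsMaximalIccIn (⋃ i, Icc (a i) (b i)) u v) (j : ι) :
    ∃ i, b i j = v j := by
  have hneg := hmax.neg
  simp only [iUnion_neg, neg_Icc] at hneg
  obtain ⟨i, hi⟩ := hneg.exists_lower_eq (neg_le_neg huv) j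
  exact ⟨i, neg_inj.1 hi⟩

end OrderedAddCommGroup

theorem maximal_box_in_union_of_grid_boxes_has_grid_endpoints_general
    (d : ℕ)
    (T : Fin d → Finset ℝ)
    (N : ℕ) (a b : Fin N → Fin d → ℝ)
    (ha : ∀ i j, a i j ∈ T j) (hb : ∀ i j, b i j ∈ T j)
    (F : Set (Fin d → ℝ))
    (hF : F = ⋃ i : Fin N, univ.pi (fun j => Icc (a i j) (b i j)))
    (u v : Fin d → ℝ) (huv : ∀ j, u j ≤ v j)
    (hBF : univ.pi (fun j => Icc (u j) (v j)) ⊆ F)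
    (hmax : ∀ u' v' : Fin d → ℝ,
      univ.pi (fun j => Icc (u j) (v j)) ⊆ univ.pi (fun j => Icc (u' j) (v' j)) →
      univ.pi (fun j => Icc (u' j) (v' j)) ⊆ F →
      univ.pi (fun j => Icc (u' j) (v' j)) = univ.pi (fun j => Icc (u j) (v j))) :
    ∀ j, u j ∈ T j ∧ v j ∈ T j := by
  simp only [pi_univ_Icc] at hF hBF hmax
  subst hF
  have hB : IsMaximalIccIn (⋃ i, Icc (a i) (b i)) u v := ⟨hBF, hmax⟩
  intro j
  obtain ⟨i, hi⟩ := hB.exists_lower_eq huv j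
  obtain ⟨i', hi'⟩ := hB.exists_upper_eq huv j
  exact ⟨hi ▸ ha i j, hi' ▸ hb i' j⟩

/-- If `F` is a finite union of nonempty closed axis-aligned boxes whose endpoints lie
on a per-coordinate grid `T j`, then any inclusion-maximal closed axis-aligned box
`B = ∏ j [u j, v j] ⊆ F` has all of its endpoints on the grid. -/
theorem maximal_box_in_union_of_grid_boxes_has_grid_endpoints
    (d : ℕ) (hd : 1 ≤ d)
    (T : Fin d → Finset ℝ) (hT : ∀ j, (T j).Nonempty)
    (N : ℕ) (a b : Fin N → Fin d → ℝ)
    (ha : ∀ i j, a i j ∈ T j) (hb : ∀ i j, b i j ∈ T j)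
    (hab : ∀ i j, a i j ≤ b i j)
    (F : Set (Fin d → ℝ))
    (hF : F = ⋃ i : Fin N, univ.pi (fun j => Icc (a i j) (b i j)))
    (u v : Fin d → ℝ) (huv : ∀ j, u j ≤ v j)
    (hBF : univ.pi (fun j => Icc (u j) (v j)) ⊆ F)
    (hmax : ∀ u' v' : Fin d → ℝ,
      univ.pi (fun j => Icc (u j) (v j)) ⊆ univ.pi (fun j => Icc (u' j) (v' j)) →
      univ.pi (fun j => Icc (u' j) (v' j)) ⊆ F →
      univ.pi (fun j => Icc (u' j) (v' j)) = univ.pi (fun j => Icc (u j) (v j))) :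
    ∀ j, u j ∈ T j ∧ v j ∈ T j :=
  maximal_box_in_union_of_grid_boxes_has_grid_endpoints_general d T N a b ha hb F hF u v huv hBF
    hmax
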